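/- Assume (ℵ_ω)^ω = ℵ_{ω+1} and (ℵ_{ω+1}, ℵ_ω) ↠ (ℵ_1, ℵ_0). Then the Noetherian type of the G_δ-modification of 2^{ℵ_ω} satisfies Nt((2^{ℵ_ω})_δ) ≥ ω_2. -/

import Mathlib

/-- The `G_δ`-modification of a topological space: the topology generated by
countable intersections of open sets. -/
def deltaTop (X : Type*) [TopologicalSpace X] : TopologicalSpace X :=
  TopologicalSpace.generateFrom {s | ∃ f : ℕ → Set X, (∀ n, IsOpen (f n)) ∧ s = ⋂ n, f n}

/-- `B` is a base for the topology `t`. -/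
def IsBaseFor {X : Type*} (t : TopologicalSpace X) (B : Set (Set X)) : Prop :=
  (∀ b ∈ B, t.IsOpen b) ∧ ∀ U, t.IsOpen U → ∀ x ∈ U, ∃ b ∈ B, x ∈ b ∧ b ⊆ U

/-- Chang's conjecture `(ℵ_{ω+1}, ℵ_ω) ↠ (ℵ_1, ℵ_0)`: every structure in a countable
language on a set of size `ℵ_{ω+1}` with a distinguished subset of size `ℵ_ω` has an
elementary substructure of size `ℵ_1` meeting the distinguished set in a set of size `ℵ_0`. -/
def ChangsConjecture : Prop :=
  ∀ (L : FirstOrder.Language.{0, 0}) (M : Type) [inst : L.Structure M],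
    L.card ≤ Cardinal.aleph0 →
    Cardinal.mk M = Cardinal.aleph (Ordinal.omega0 + 1) →
    ∀ U : Set M, Cardinal.mk U = Cardinal.aleph Ordinal.omega0 →
      ∃ S : L.ElementarySubstructure M,
        Cardinal.mk S = Cardinal.aleph 1 ∧
        Cardinal.mk (((S : FirstOrder.Language.Substructure L M) : Set M) ∩ U : Set M) =
          Cardinal.aleph0

/-!
Let `x` be the point `fun _ => false`. The `G_δ`-open sets containing `x` are exactly those
containing a cylinder `A.pi fun i => {x i}` with `A` countable, so the supports of the base
elements containing `x` are cofinal among the countable subsets of `ι`. Since `cf ℵ_ω = ω`, a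
diagonal argument shows that there are more than `ℵ_ω` of them; pick `ℵ_{ω+1}` base elements.
Chang's conjecture, applied to `ι ⊕ P` with unary functions enumerating the supports, yields an
elementary substructure of size `ℵ₁` whose trace `A` on `ι` is countable, yet which contains the
supports of uncountably many of the chosen elements. A base element inside the cylinder over `A`
is then contained in all of them.
-/

open Cardinal FirstOrder Set
open scoped Ordinal

theorem isOpen_deltaTop_biInter {X α : Type*} [TopologicalSpace X] {s : Set α} (hs : s.Countable)
    {f : α → Set X} (hf : ∀ a ∈ s, IsOpen (f a)) : (deltaTop X).IsOpen (⋂ a ∈ s, f a) := by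
  rcases s.eq_empty_or_nonempty with rfl | hne
  · simpa using (deltaTop X).isOpen_univ
  obtain ⟨g, rfl⟩ := hs.exists_eq_range hne
  rw [biInter_range]
  exact .basic _ ⟨fun n => f (g n), fun n => hf _ (mem_range_self n), rfl⟩

theorem subset_of_pi_singleton_subset {ι : Type*} {π : ι → Type*} [∀ i, Nontrivial (π i)]
    {x : ∀ i, π i} {A D : Set ι}
    (h : D.pi (fun i => {x i}) ⊆ A.pi (fun i => {x i})) : A ⊆ D := by
  classical
  intro i hiA
  by_contra hiD
  obtain ⟨y, hy⟩ := exists_ne (x i)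
  have hmem : Function.update x i y ∈ D.pi (fun i => {x i}) :=
    fun j hj => by simp [Function.update_of_ne (ne_of_mem_of_not_mem hj hiD)]
  exact hy (by simpa using h hmem i hiA)

section Pi

variable {ι : Type*} {π : ι → Type*} [∀ i, TopologicalSpace (π i)]

theorem isOpen_deltaTop_pi_singleton [∀ i, DiscreteTopology (π i)] (x : ∀ i, π i) {A : Set ι}
    (hA : A.Countable) : (deltaTop (∀ i, π i)).IsOpen (A.pi fun i => {x i}) := by
  rw [pi_def]
  exact isOpen_deltaTop_biInter hA fun i _ => (isOpen_discrete _).preimage (continuous_apply i)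

theorem exists_pi_singleton_subset_of_isOpen_deltaTop {V : Set (∀ i, π i)}
    (hV : (deltaTop (∀ i, π i)).IsOpen V) {x : ∀ i, π i} (hx : x ∈ V) :
    ∃ A : Set ι, A.Countable ∧ A.pi (fun i => {x i}) ⊆ V := by
  induction hV with
  | basic s hs =>
    obtain ⟨f, hf, rfl⟩ := hs
    have hfin : ∀ n, ∃ I : Finset ι, (I : Set ι).pi (fun i => {x i}) ⊆ f n := fun n => by
      obtain ⟨I, u, hu, hIu⟩ := isOpen_pi_iff.mp (hf n) x (mem_iInter.mp hx n)
      exact ⟨I, (pi_mono fun i hi => singleton_subset_iff.mpr (hu i hi).2).trans hIu⟩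
    choose I hI using hfin
    refine ⟨⋃ n, I n, countable_iUnion fun n => (I n).countable_toSet, ?_⟩
    exact subset_iInter fun n => (pi_mono' (fun _ _ => subset_rfl) (subset_iUnion _ n)).trans (hI n)
  | univ => exact ⟨∅, countable_empty, subset_univ _⟩
  | inter s t _ _ ihs iht =>
    obtain ⟨A, hA, hAs⟩ := ihs hx.1
    obtain ⟨A', hA', hAt⟩ := iht hx.2
    refine ⟨A ∪ A', hA.union hA', subset_inter ?_ ?_⟩
    · exact (pi_mono' (fun _ _ => subset_rfl) subset_union_left).trans hAs
    · exact (pi_mono' (fun _ _ => subset_rfl) subset_union_right).trans hAt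
  | sUnion S _ ih =>
    obtain ⟨s, hsS, hxs⟩ := hx
    obtain ⟨A, hA, hAs⟩ := ih s hsS hxs
    exact ⟨A, hA, hAs.trans (subset_sUnion_of_mem hsS)⟩

end Pi

universe u

theorem exists_iUnion_eq_univ_of_mk_le_sum {α J : Type u} {c : J → Cardinal.{u}}
    (h : #α ≤ sum c) : ∃ E : J → Set α, (∀ j, #(E j) ≤ c j) ∧ ⋃ j, E j = Set.univ := by
  obtain ⟨k⟩ : #α ≤ #(Σ j, (c j).out) := by simpa only [mk_sigma, mk_out] using h
  refine ⟨fun j => k ⁻¹' range (Sigma.mk j), fun j => ?_, ?_⟩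
  · exact (mk_preimage_of_injective _ _ k.injective).trans (mk_range_le.trans (mk_out (c j)).le)
  · exact eq_univ_of_forall fun a => mem_iUnion.mpr ⟨(k a).1, (k a).2, rfl⟩

theorem exists_countable_forall_not_subset {ι : Type} {c : ℕ → Cardinal}
    (hc : ∀ n, c n * ℵ₀ < #ι) {𝒟 : Set (Set ι)} (h𝒟 : ∀ D ∈ 𝒟, D.Countable)
    (hcard : #𝒟 ≤ sum c) : ∃ A : Set ι, A.Countable ∧ ∀ D ∈ 𝒟, ¬ A ⊆ D := by
  obtain ⟨E, hE, hcover⟩ := exists_iUnion_eq_univ_of_mk_le_sum hcard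
  have hmiss : ∀ n, ∃ a, a ∉ ⋃ D : E n, (D : Set ι) := fun n => by
    by_contra! hall
    have hunion : #(⋃ D : E n, (D : Set ι)) ≤ c n * ℵ₀ :=
      (mk_iUnion_le _).trans (mul_le_mul' (hE n) (ciSup_le' fun D =>
        le_aleph0_iff_set_countable.mpr (h𝒟 _ D.1.2)))
    rw [eq_univ_of_forall hall, mk_univ] at hunion
    exact (hc n).not_ge hunion
  choose a ha using hmiss
  refine ⟨range a, countable_range a, fun D hD hsub => ?_⟩
  obtain ⟨n, hn⟩ := mem_iUnion.mp (hcover ▸ mem_univ (⟨D, hD⟩ : 𝒟))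
  exact ha n (mem_iUnion.mpr ⟨⟨⟨D, hD⟩, hn⟩, hsub (mem_range_self n)⟩)

theorem aleph_omega0_le_sum_aleph_nat : ℵ_ ω ≤ sum fun n : ℕ => ℵ_ n := by
  rw [aleph_limit Ordinal.isSuccLimit_omega0]
  refine ciSup_le' fun ⟨o, ho⟩ => ?_
  obtain ⟨n, rfl⟩ := Ordinal.lt_omega0.mp ho
  exact le_sum (fun n : ℕ => ℵ_ n) n

theorem aleph_omega0_lt_mk_of_isCofinal {ι : Type} (hι : #ι = ℵ_ ω) {𝒟 : Set (Set ι)}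
    (h𝒟 : ∀ D ∈ 𝒟, D.Countable) (hcof : ∀ A : Set ι, A.Countable → ∃ D ∈ 𝒟, A ⊆ D) :
    ℵ_ ω < #𝒟 := by
  by_contra! hcard
  obtain ⟨A, hA, hnot⟩ := exists_countable_forall_not_subset (c := fun n : ℕ => ℵ_ n)
    (fun n => by
      rw [mul_aleph0_eq (aleph0_le_aleph _), hι, aleph_lt_aleph]
      exact Ordinal.natCast_lt_omega0 n)
    h𝒟 (hcard.trans aleph_omega0_le_sum_aleph_nat)
  obtain ⟨D, hD, hAD⟩ := hcof A hA
  exact hnot D hD hAD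

def unaryLanguage (F : Type) : FirstOrder.Language.{0, 0} where
  Functions := fun
    | 1 => F
    | _ => Empty
  Relations := fun _ => Empty

namespace unaryLanguage

variable {F M : Type}

def toStructure (f : F → M → M) : (unaryLanguage F).Structure M where
  funMap {n} := match n with
    | 1 => fun g x => f g (x 0)
    | 0 | _ + 2 => fun g => nomatch g
  RelMap r := nomatch r

theorem card_le [Countable F] : (unaryLanguage F).card ≤ ℵ₀ := by
  have : ∀ n, Countable ((unaryLanguage F).Functions n) := fun
    | 1 => inferInstanceAs (Countable F)
    | 0 | _ + 2 => inferInstanceAs (Countable Empty)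
  have : ∀ n, Countable ((unaryLanguage F).Relations n) := fun _ =>
    inferInstanceAs (Countable Empty)
  exact mk_le_aleph0

theorem apply_mem {f : F → M → M} (S : @Language.Substructure (unaryLanguage F) M (toStructure f))
    (g : F) {x : M} (hx : x ∈ S) : f g x ∈ S :=
  letI := toStructure f
  S.fun_mem (n := 1) g ![x] (fun i => by fin_cases i; exact hx)

end unaryLanguage

theorem ChangsConjecture.exists_countable_uncountably_many_subset (hcc : ChangsConjecture)
    {ι P : Type} (hι : #ι = ℵ_ ω) (hP : #P = ℵ_ (ω + 1))
    (D : P → Set ι) (hD : ∀ p, (D p).Countable) :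
    ∃ A : Set ι, A.Countable ∧ ¬ {p | D p ⊆ A}.Countable := by
  have : Nonempty ι := mk_ne_zero_iff.mp (hι ▸ aleph_pos _).ne'
  choose g hg using fun p => countable_iff_exists_subset_range.mp (hD p)
  -- the `n`-th function sends `p` to the `n`-th point of `D p`, so a substructure containing `p`
  -- contains `D p`
  let _ := unaryLanguage.toStructure fun n : ℕ => Sum.elim Sum.inl fun p => Sum.inl (g p n)
  have hM : #(ι ⊕ P) = ℵ_ (ω + 1) := by
    rw [mk_sum, lift_id, lift_id, hι, hP]
    exact add_eq_right (aleph0_le_aleph _) (aleph_le_aleph.mpr le_self_add)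
  have hU : #(range (Sum.inl : ι → ι ⊕ P)) = ℵ_ ω := by
    rw [mk_range_eq _ Sum.inl_injective, hι]
  obtain ⟨S, hS, hSU⟩ := hcc (unaryLanguage ℕ) _ unaryLanguage.card_le hM _ hU
  set s : Set (ι ⊕ P) := (S.toSubstructure : Set (ι ⊕ P))
  have hinl : (Sum.inl ⁻¹' s).Countable := by
    have : (s ∩ range Sum.inl).Countable := le_aleph0_iff_set_countable.mp hSU.le
    simpa using this.preimage Sum.inl_injective
  refine ⟨Sum.inl ⁻¹' s, hinl, fun hcount => ?_⟩
  have hinr : Sum.inr ⁻¹' s ⊆ {p | D p ⊆ Sum.inl ⁻¹' s} := by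
    intro p hp i hi
    obtain ⟨n, rfl⟩ := hg p hi
    exact unaryLanguage.apply_mem S.toSubstructure n hp
  have : s.Countable := by
    rw [← image_preimage_inl_union_image_preimage_inr s]
    exact (hinl.image _).union ((hcount.mono hinr).image _)
  have := le_aleph0_iff_set_countable.mpr this
  exact (aleph0_lt_aleph_one.trans_eq hS.symm).not_ge this

theorem stmt8_general
    (hcc : ChangsConjecture)
    (ι : Type) (hι : Cardinal.mk ι = Cardinal.aleph Ordinal.omega0) :
    ¬ ∃ B : Set (Set (ι → Bool)),
        IsBaseFor (deltaTop (ι → Bool)) B ∧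
        ∀ b ∈ B, {b' ∈ B | b ⊆ b'}.Countable := by
  rintro ⟨B, ⟨hBopen, hBbase⟩, hBup⟩
  let x : ι → Bool := fun _ => false
  let B₀ := {b ∈ B | x ∈ b}
  choose! supp hsupp_countable hsupp_sub using fun b (hb : b ∈ B₀) =>
    exists_pi_singleton_subset_of_isOpen_deltaTop (hBopen b hb.1) hb.2
  have hbasic : ∀ A : Set ι, A.Countable → ∃ b ∈ B₀, b ⊆ A.pi fun i => {x i} := fun A hA =>
    let ⟨b, hb, hxb, hbA⟩ := hBbase _ (isOpen_deltaTop_pi_singleton x hA) x fun _ _ => rfl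
    ⟨b, ⟨hb, hxb⟩, hbA⟩
  have hsupp_cofinal : ℵ_ ω < #(supp '' B₀) := by
    refine aleph_omega0_lt_mk_of_isCofinal hι (by rintro _ ⟨b, hb, rfl⟩; exact hsupp_countable b hb)
      fun A hA => ?_
    obtain ⟨b, hb, hbA⟩ := hbasic A hA
    exact ⟨supp b, mem_image_of_mem _ hb,
      subset_of_pi_singleton_subset ((hsupp_sub b hb).trans hbA)⟩
  have hB₀ : ℵ_ (ω + 1) ≤ #B₀ := by
    rw [← succ_aleph]
    exact Order.succ_le_of_lt (hsupp_cofinal.trans_le mk_image_le)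
  obtain ⟨P, hPB₀, hP⟩ := le_mk_iff_exists_subset.mp hB₀
  obtain ⟨A, hA, hPA⟩ := hcc.exists_countable_uncountably_many_subset hι hP (fun p : P => supp p)
    fun p => hsupp_countable p (hPB₀ p.2)
  obtain ⟨b, hb, hbA⟩ := hbasic A hA
  refine hPA (((hBup b hb.1).preimage Subtype.val_injective).mono fun p hpA => ?_)
  exact ⟨(hPB₀ p.2).1, hbA.trans ((pi_mono' (fun _ _ => subset_rfl) hpA).trans
    (hsupp_sub p (hPB₀ p.2)))⟩

/-- Assume `(ℵ_ω)^ω = ℵ_{ω+1}` and Chang's conjecture `(ℵ_{ω+1}, ℵ_ω) ↠ (ℵ_1, ℵ_0)`.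
Then `Nt((2^{ℵ_ω})_δ) ≥ ω_2`: the `G_δ`-modification of `2^{ℵ_ω}` has no base `ℬ` with
`|{B' ∈ ℬ : B ⊆ B'}| ≤ ℵ_0` for every `B ∈ ℬ`. -/
theorem stmt8
    (hpow : Cardinal.aleph Ordinal.omega0 ^ Cardinal.aleph0 =
      Cardinal.aleph (Ordinal.omega0 + 1))
    (hcc : ChangsConjecture)
    (ι : Type) (hι : Cardinal.mk ι = Cardinal.aleph Ordinal.omega0) :
    ¬ ∃ B : Set (Set (ι → Bool)),
        IsBaseFor (deltaTop (ι → Bool)) B ∧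
        ∀ b ∈ B, {b' ∈ B | b ⊆ b'}.Countable :=
  stmt8_general hcc ι hι
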